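/- arXiv:2306.13065 — 2 statements merged into one kernel-verified Lean document; each statement's English description precedes it below -/
import Mathlib

section
/- For every n ≥ 2, the number L_n of preference lists α ∈ [n]^n with exactly n−1 lucky cars equals n!·(2(n+1)H_n − 4n), where H_n = ∑_{i=1}^n 1/i is the nth harmonic number. (This quantity n!·(2(n+1)H_n − 4n) is the total number of pivot comparisons performed by Quicksort over all n! orderings of an array of size n.) -/
open Finset

/-- The first unoccupied spot numbered greater than or equal to `p`, if any. -/
def nextSpot {n : ℕ} (occ : Finset (Fin n)) (p : Fin n) : Option (Fin n) :=
  if h : (Finset.univ.filter (fun s : Fin n => p ≤ s ∧ s ∉ occ)).Nonempty then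
    some ((Finset.univ.filter (fun s : Fin n => p ≤ s ∧ s ∉ occ)).min' h)
  else none

/-- The set of occupied spots after the first `k` cars have tried to park,
given the preference list `α`. -/
def occupiedAfter {n : ℕ} (α : Fin n → Fin n) : ℕ → Finset (Fin n)
  | 0 => ∅
  | k + 1 =>
    if h : k < n then
      match nextSpot (occupiedAfter α k) (α ⟨k, h⟩) with
      | some s => insert s (occupiedAfter α k)
      | none => occupiedAfter α k
    else occupiedAfter α k

/-- The spot in which car `i` parks (cars numbered `0,…,n-1` enter in order),
or `none` if car `i` is unable to park. -/
def carSpot {n : ℕ} (α : Fin n → Fin n) (i : Fin n) : Option (Fin n) :=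
  nextSpot (occupiedAfter α i.val) (α i)

/-- The number of lucky cars: cars parking exactly in their preferred spot. -/
def luckyCount {n : ℕ} (α : Fin n → Fin n) : ℕ :=
  (Finset.univ.filter (fun i : Fin n => carSpot α i = some (α i))).card

/-- `L n` is the number of preference lists in `[n]^n` with exactly `n - 1` lucky cars. -/
def luckyL (n : ℕ) : ℕ :=
  (Finset.univ.filter
    (fun α : Fin n → Fin n => (luckyCount α : ℤ) = (n : ℤ) - 1)).card

/-- The `n`th harmonic number. -/
noncomputable def H (n : ℕ) : ℝ := ∑ i ∈ Finset.Icc 1 n, (1 : ℝ) / i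

open Finset
section
variable {n : ℕ}

theorem nextSpot_some {occ : Finset (Fin n)} {p s : Fin n}
    (h : nextSpot occ p = some s) :
    p ≤ s ∧ s ∉ occ ∧ ∀ t, p ≤ t → t ∉ occ → s ≤ t := by
  unfold nextSpot at h
  split_ifs at h with hne
  · have hs : s = (Finset.univ.filter (fun s : Fin n => p ≤ s ∧ s ∉ occ)).min' hne :=
      (Option.some_injective _ h).symm
    have hmem := Finset.min'_mem _ hne
    rw [← hs] at hmem
    simp only [mem_filter] at hmem
    refine ⟨hmem.2.1, hmem.2.2, fun t hpt ht => ?_⟩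
    rw [hs]
    exact Finset.min'_le _ _ (by simp [hpt, ht])


theorem nextSpot_isSome {occ : Finset (Fin n)} {p t : Fin n}
    (hpt : p ≤ t) (ht : t ∉ occ) : ∃ s, nextSpot occ p = some s := by
  unfold nextSpot
  have hne : (Finset.univ.filter (fun s : Fin n => p ≤ s ∧ s ∉ occ)).Nonempty :=
    ⟨t, by simp [hpt, ht]⟩
  rw [dif_pos hne]
  exact ⟨_, rfl⟩

theorem nextSpot_none {occ : Finset (Fin n)} {p : Fin n}
    (h : ∀ t, p ≤ t → t ∈ occ) : nextSpot occ p = none := by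
  unfold nextSpot
  rw [dif_neg]
  rintro ⟨t, ht⟩
  simp only [mem_filter] at ht
  exact ht.2.2 (h t ht.2.1)

theorem nextSpot_self {occ : Finset (Fin n)} {p : Fin n} (h : p ∉ occ) :
    nextSpot occ p = some p := by
  obtain ⟨s, hs⟩ := nextSpot_isSome (le_refl p) h
  obtain ⟨h1, h2, h3⟩ := nextSpot_some hs
  have : s = p := le_antisymm (h3 p (le_refl p) h) h1
  rwa [this] at hs

theorem nextSpot_eq {occ : Finset (Fin n)} {p s : Fin n} (hps : p ≤ s) (hs : s ∉ occ)
    (hall : ∀ t, p ≤ t → t < s → t ∈ occ) : nextSpot occ p = some s := by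
  obtain ⟨x, hx⟩ := nextSpot_isSome hps hs
  obtain ⟨h1, h2, h3⟩ := nextSpot_some hx
  have hxs : x = s := by
    rcases lt_or_ge x s with h | h
    · exact absurd (hall x h1 h) h2
    · exact le_antisymm (h3 s hps hs) h
  rwa [hxs] at hx

theorem lucky_iff {α : Fin n → Fin n} {i : Fin n} :
    carSpot α i = some (α i) ↔ α i ∉ occupiedAfter α i.val := by
  constructor
  · intro h
    exact (nextSpot_some h).2.1
  · intro h
    exact nextSpot_self h

theorem mem_occupiedAfter {α : Fin n → Fin n} {k : ℕ} {s : Fin n} :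
    s ∈ occupiedAfter α k ↔ ∃ j : Fin n, j.val < k ∧ carSpot α j = some s := by
  induction k with
  | zero => simp [occupiedAfter]
  | succ k ih =>
    by_cases hk : k < n
    · have hrw : occupiedAfter α (k+1) =
        match carSpot α ⟨k, hk⟩ with
        | some s => insert s (occupiedAfter α k)
        | none => occupiedAfter α k := by
        show (if h : k < n then _ else _) = _
        rw [dif_pos hk]; rfl
      constructor
      · intro hmem
        rw [hrw] at hmem
        rcases hcs : carSpot α ⟨k, hk⟩ with _ | x
        · rw [hcs] at hmem
          obtain ⟨j, hj, hcj⟩ := ih.1 hmem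
          exact ⟨j, Nat.lt_succ_of_lt hj, hcj⟩
        · rw [hcs] at hmem
          rcases Finset.mem_insert.1 hmem with h | h
          · exact ⟨⟨k, hk⟩, Nat.lt_succ_self k, by rw [hcs, h]⟩
          · obtain ⟨j, hj, hcj⟩ := ih.1 h
            exact ⟨j, Nat.lt_succ_of_lt hj, hcj⟩
      · rintro ⟨j, hj, hcj⟩
        rw [hrw]
        rcases Nat.lt_succ_iff_lt_or_eq.1 hj with h | h
        · have := ih.2 ⟨j, h, hcj⟩
          rcases hcs : carSpot α ⟨k, hk⟩ with _ | x
          · exact this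
          · exact Finset.mem_insert_of_mem this
        · have hjeq : j = ⟨k, hk⟩ := Fin.ext h
          rw [hjeq] at hcj
          rw [hcj]
          exact Finset.mem_insert_self _ _
    · have hrw : occupiedAfter α (k+1) = occupiedAfter α k := by
        show (if h : k < n then _ else _) = _
        rw [dif_neg hk]
      rw [hrw, ih]
      constructor
      · rintro ⟨j, hj, hcj⟩; exact ⟨j, Nat.lt_succ_of_lt hj, hcj⟩
      · rintro ⟨j, hj, hcj⟩
        refine ⟨j, ?_, hcj⟩
        have := j.isLt
        omega

theorem occupiedAfter_mono {α : Fin n → Fin n} {k m : ℕ} (h : k ≤ m) :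
    occupiedAfter α k ⊆ occupiedAfter α m := by
  intro s hs
  rw [mem_occupiedAfter] at hs ⊢
  obtain ⟨j, hj, hcj⟩ := hs
  exact ⟨j, lt_of_lt_of_le hj h, hcj⟩

theorem carSpot_inj {α : Fin n → Fin n} {i j s : Fin n}
    (hi : carSpot α i = some s) (hj : carSpot α j = some s) : i = j := by
  by_contra hne
  wlog hlt : i < j generalizing i j
  · exact this hj hi (Ne.symm hne) (lt_of_le_of_ne (not_lt.1 hlt) (Ne.symm hne))
  have hmem : s ∈ occupiedAfter α j.val :=
    mem_occupiedAfter.2 ⟨i, hlt, hi⟩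
  exact (nextSpot_some hj).2.1 hmem

end

section Char
open Finset
variable {n : ℕ}

def Sv (n : ℕ) (v w : Fin n) : ℕ := if v < w then (w : ℕ) else n

def Tset (α : Fin n → Fin n) (v w : Fin n) : Finset (Fin n) :=
  univ.filter (fun t => v ≤ α t ∧ ((α t : ℕ) < Sv n v w))

def Good (v w : Fin n) (α : Fin n → Fin n) : Prop :=
  (univ.image α = univ.erase w) ∧
  (univ.filter (fun t => α t = v)).card = 2 ∧
  ∀ t, v < α t → ((α t : ℕ) < Sv n v w) → ∃ t', t < t' ∧ α t' = v

instance (v w : Fin n) : DecidablePred (Good v w) := fun α => by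
  unfold Good; infer_instance

theorem v_lt_Sv (v w : Fin n) : (v : ℕ) < Sv n v w := by
  unfold Sv
  split_ifs with h
  · exact h
  · exact v.isLt

theorem Sv_le (v w : Fin n) : Sv n v w ≤ n := by
  unfold Sv; split_ifs with h
  · exact le_of_lt w.isLt
  · exact le_refl n

theorem Good.not_w {v w : Fin n} {α : Fin n → Fin n} (hG : Good v w α) (t : Fin n) :
    α t ≠ w := by
  intro h
  have : α t ∈ univ.image α := mem_image_of_mem _ (mem_univ t)
  rw [hG.1, h] at this
  exact absurd (mem_erase.1 this).1 (by simp)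

/-- fibers of values other than `v` have at most one element -/
theorem Good.fiber_le_one {v w : Fin n} {α : Fin n → Fin n}
    (himg : univ.image α = univ.erase w) (hfib : (univ.filter (fun t => α t = v)).card = 2)
    (hvw : v ≠ w) {u : Fin n} (hu : u ≠ v) :
    (univ.filter (fun t => α t = u)).card ≤ 1 := by
  by_contra hcon
  push_neg at hcon
  have hsum : ∑ b ∈ univ, (univ.filter (fun t : Fin n => α t = b)).card = n := by
    rw [← Finset.card_eq_sum_card_fiberwise (fun x _ => mem_univ (α x))]
    simp
  have huim : u ∈ univ.erase w := by
    rw [← himg]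
    have hne : (univ.filter (fun t => α t = u)).Nonempty := card_pos.1 (by omega)
    obtain ⟨t, ht⟩ := hne
    simp only [mem_filter] at ht
    exact ht.2 ▸ mem_image_of_mem _ (mem_univ t)
  have hvim : v ∈ univ.erase w := mem_erase.2 ⟨hvw, mem_univ v⟩
  have hge1 : ∀ b ∈ univ.erase w, 1 ≤ (univ.filter (fun t : Fin n => α t = b)).card := by
    intro b hb
    rw [← himg] at hb
    obtain ⟨t, _, ht⟩ := mem_image.1 hb
    exact card_pos.2 ⟨t, by simp [ht]⟩
  have huim2 : u ∈ (univ.erase w).erase v := mem_erase.2 ⟨hu, huim⟩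
  have h1 : ∑ b ∈ (univ.erase w).erase v, (univ.filter (fun t : Fin n => α t = b)).card
      + (univ.filter (fun t : Fin n => α t = v)).card
      = ∑ b ∈ univ.erase w, (univ.filter (fun t : Fin n => α t = b)).card :=
    Finset.sum_erase_add _ _ hvim
  have h2 : ∑ b ∈ ((univ.erase w).erase v).erase u, (univ.filter (fun t : Fin n => α t = b)).card
      + (univ.filter (fun t : Fin n => α t = u)).card
      = ∑ b ∈ (univ.erase w).erase v, (univ.filter (fun t : Fin n => α t = b)).card :=
    Finset.sum_erase_add _ _ huim2
  have h3 : (((univ.erase w).erase v).erase u).card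
      ≤ ∑ b ∈ ((univ.erase w).erase v).erase u, (univ.filter (fun t : Fin n => α t = b)).card := by
    calc (((univ.erase w).erase v).erase u).card
        = ∑ _b ∈ ((univ.erase w).erase v).erase u, 1 := by simp
      _ ≤ _ := Finset.sum_le_sum (fun b hb => hge1 b (mem_of_mem_erase (mem_of_mem_erase hb)))
  have hc : (((univ.erase w).erase v).erase u).card = n - 3 := by
    rw [card_erase_of_mem huim2, card_erase_of_mem hvim, card_erase_of_mem (mem_univ w)]
    simp only [card_univ, Fintype.card_fin]
    omega
  have hn3 : 3 ≤ n := by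
    have h2c : 2 ≤ (univ.erase w).card :=
      Finset.one_lt_card.2 ⟨v, hvim, u, huim, fun h => hu h.symm⟩
    rw [card_erase_of_mem (mem_univ w), card_univ, Fintype.card_fin] at h2c
    omega
  have hle : ∑ b ∈ univ.erase w, (univ.filter (fun t : Fin n => α t = b)).card
      ≤ ∑ b ∈ univ, (univ.filter (fun t : Fin n => α t = b)).card :=
    Finset.sum_le_sum_of_subset (erase_subset _ _)
  omega

end Char

section Char2
open Finset
variable {n : ℕ}

theorem occ_succ_some {α : Fin n → Fin n} {k : ℕ} (hk : k < n) {s : Fin n}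
    (h : nextSpot (occupiedAfter α k) (α ⟨k, hk⟩) = some s) :
    occupiedAfter α (k + 1) = insert s (occupiedAfter α k) := by
  show (if h : k < n then _ else _) = _
  rw [dif_pos hk]
  simp only [h]

theorem occ_succ_none {α : Fin n → Fin n} {k : ℕ} (hk : k < n)
    (h : nextSpot (occupiedAfter α k) (α ⟨k, hk⟩) = none) :
    occupiedAfter α (k + 1) = occupiedAfter α k := by
  show (if h : k < n then _ else _) = _
  rw [dif_pos hk]
  simp only [h]

theorem occ_succ_ge {α : Fin n → Fin n} {k : ℕ} (hk : ¬ k < n) :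
    occupiedAfter α (k + 1) = occupiedAfter α k := by
  show (if h : k < n then _ else _) = _
  rw [dif_neg hk]

theorem Good.inj_off {v w : Fin n} {α : Fin n → Fin n} (hvw : v ≠ w) (hG : Good v w α)
    {t t' : Fin n} (h : α t = α t') (hne : t ≠ t') : α t = v := by
  by_contra hv
  have : 1 < (univ.filter (fun x => α x = α t)).card :=
    Finset.one_lt_card.2 ⟨t, by simp, t', by simp [h.symm], hne⟩
  have := Good.fiber_le_one hG.1 hG.2.1 hvw hv
  omega

theorem Good.exists_pair {v w : Fin n} {α : Fin n → Fin n} (hvw : v ≠ w) (hG : Good v w α) :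
    ∃ j i : Fin n, j < i ∧ α j = v ∧ α i = v ∧
      (∀ t, α t = v → t = j ∨ t = i) ∧ (∀ t ∈ Tset α v w, t ≤ i) := by
  obtain ⟨a, b, hab, hfil⟩ := Finset.card_eq_two.1 hG.2.1
  have hav : α a = v := by
    have : a ∈ univ.filter (fun t => α t = v) := by rw [hfil]; simp
    exact (mem_filter.1 this).2
  have hbv : α b = v := by
    have : b ∈ univ.filter (fun t => α t = v) := by rw [hfil]; simp
    exact (mem_filter.1 this).2
  have hT : (Tset α v w).Nonempty := by
    refine ⟨a, ?_⟩
    simp only [Tset, mem_filter, mem_univ, true_and, hav]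
    exact ⟨le_refl v, v_lt_Sv v w⟩
  set i := (Tset α v w).max' hT with hi
  have himax : ∀ t ∈ Tset α v w, t ≤ i := fun t ht => Finset.le_max' _ t ht
  have hiv : α i = v := by
    by_contra hne
    have hmem : i ∈ Tset α v w := Finset.max'_mem _ hT
    simp only [Tset, mem_filter, mem_univ, true_and] at hmem
    have hlt : v < α i := lt_of_le_of_ne hmem.1 (fun h => hne h.symm)
    obtain ⟨t', hlt', hv'⟩ := hG.2.2 i hlt hmem.2
    have : t' ∈ Tset α v w := by
      simp only [Tset, mem_filter, mem_univ, true_and, hv']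
      exact ⟨le_refl v, v_lt_Sv v w⟩
    exact absurd (himax t' this) (not_le.2 hlt')
  have hifib : i ∈ ({a, b} : Finset (Fin n)) := by
    rw [← hfil]; simp [hiv]
  have hmem : ∀ t, α t = v → t = a ∨ t = b := by
    intro t ht
    have : t ∈ ({a, b} : Finset (Fin n)) := by rw [← hfil]; simp [ht]
    simpa using this
  rcases Finset.mem_insert.1 hifib with hia | hib
  · -- i = a, other is b
    refine ⟨b, i, ?_, hbv, hiv, ?_, himax⟩
    · have hbT : b ∈ Tset α v w := by
        simp only [Tset, mem_filter, mem_univ, true_and, hbv]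
        exact ⟨le_refl v, v_lt_Sv v w⟩
      have := himax b hbT
      have hbne : b ≠ i := by rw [hia]; exact fun h => hab h.symm
      exact lt_of_le_of_ne this hbne
    · intro t ht
      rcases hmem t ht with h | h
      · right; rw [h, hia]
      · left; exact h
  · have hib' : i = b := by simpa using hib
    refine ⟨a, i, ?_, hav, hiv, ?_, himax⟩
    · have haT : a ∈ Tset α v w := by
        simp only [Tset, mem_filter, mem_univ, true_and, hav]
        exact ⟨le_refl v, v_lt_Sv v w⟩
      have := himax a haT
      have hane : a ≠ i := by rw [hib']; exact hab
      exact lt_of_le_of_ne this hane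
    · intro t ht
      rcases hmem t ht with h | h
      · left; exact h
      · right; rw [h, hib']

theorem Good.unlucky_eq {v w : Fin n} {α : Fin n → Fin n} (hvw : v ≠ w) (hG : Good v w α) :
    ∃ i : Fin n, univ.filter (fun t => ¬ carSpot α t = some (α t)) = {i} := by
  obtain ⟨j, i, hji, hjv, hiv, hfib, himax⟩ := Good.exists_pair hvw hG
  refine ⟨i, ?_⟩
  -- the invariant
  have main : ∀ k, occupiedAfter α k =
      (univ.filter (fun t : Fin n => t.val < k ∧ t ≠ i)).image α
      ∪ (if i.val < k ∧ v < w then {w} else ∅) := by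
    intro k
    induction k with
    | zero => simp [occupiedAfter]
    | succ k ih =>
      by_cases hk : k < n
      · by_cases hki : k = i.val
        · -- car i's turn
          have hieq : (⟨k, hk⟩ : Fin n) = i := Fin.ext hki
          have hocc : ∀ u : Fin n, (v : ℕ) ≤ (u : ℕ) → (u : ℕ) < Sv n v w →
              u ∈ occupiedAfter α k := by
            intro u huv huS
            have huw : u ≠ w := by
              intro h
              unfold Sv at huS
              split_ifs at huS with hvw2
              · rw [h] at huS; omega
              · have hwv : w < v := lt_of_le_of_ne (not_lt.1 hvw2) (fun hh => hvw hh.symm)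
                rw [h] at huv
                have := (Fin.lt_def.1 hwv)
                omega
            have huim : u ∈ univ.image α := by
              rw [hG.1]; exact mem_erase.2 ⟨huw, mem_univ u⟩
            obtain ⟨t, _, ht⟩ := mem_image.1 huim
            rw [ih]
            by_cases huv2 : u = v
            · -- use j
              apply mem_union_left
              refine mem_image.2 ⟨j, ?_, by rw [hjv, huv2]⟩
              simp only [mem_filter, mem_univ, true_and]
              refine ⟨?_, fun h => absurd h (ne_of_lt hji)⟩
              have := Fin.lt_def.1 hji
              omega
            · apply mem_union_left
              have htT : t ∈ Tset α v w := by
                simp only [Tset, mem_filter, mem_univ, true_and, ht]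
                exact ⟨Fin.le_def.2 huv, huS⟩
              have hti : t ≤ i := himax t htT
              have htne : t ≠ i := by
                intro h; rw [h, hiv] at ht; exact huv2 ht.symm
              refine mem_image.2 ⟨t, ?_, ht⟩
              simp only [mem_filter, mem_univ, true_and]
              refine ⟨?_, htne⟩
              have := Fin.lt_def.1 (lt_of_le_of_ne hti htne)
              omega
          have hnw : ∀ s ∈ occupiedAfter α k, s ≠ w := by
            intro s hs
            rw [ih] at hs
            rcases mem_union.1 hs with h | h
            · obtain ⟨t, _, ht⟩ := mem_image.1 h
              rw [← ht]; exact Good.not_w hG t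
            · rw [if_neg (by omega : ¬ (i.val < k ∧ v < w))] at h
              exact absurd h (notMem_empty s)
          by_cases hvw2 : v < w
          · -- car i parks at w
            have hwS : Sv n v w = (w : ℕ) := if_pos hvw2
            have hnext : nextSpot (occupiedAfter α k) (α ⟨k, hk⟩) = some w := by
              rw [hieq, hiv]
              apply nextSpot_eq (le_of_lt hvw2)
              · intro h; exact (hnw w h) rfl
              · intro t h1 h2
                exact hocc t (Fin.le_def.1 h1) (by rw [hwS]; exact Fin.lt_def.1 h2)
            rw [occ_succ_some hk hnext, ih]
            rw [if_neg (by omega : ¬ (i.val < k ∧ v < w)),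
              if_pos (⟨by omega, hvw2⟩ : i.val < k + 1 ∧ v < w)]
            have hfeq : (univ.filter (fun t : Fin n => t.val < k + 1 ∧ t ≠ i))
                = (univ.filter (fun t : Fin n => t.val < k ∧ t ≠ i)) := by
              apply filter_congr
              intro t _
              constructor
              · rintro ⟨h1, h2⟩
                refine ⟨?_, h2⟩
                rcases Nat.lt_succ_iff_lt_or_eq.1 h1 with h | h
                · exact h
                · exact absurd (Fin.ext (h.trans hki) : t = i) h2
              · rintro ⟨h1, h2⟩; exact ⟨Nat.lt_succ_of_lt h1, h2⟩
            rw [hfeq]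
            rw [union_empty, union_comm, ← insert_eq]
          · -- car i fails
            have hSn : Sv n v w = n := if_neg hvw2
            have hnext : nextSpot (occupiedAfter α k) (α ⟨k, hk⟩) = none := by
              rw [hieq, hiv]
              apply nextSpot_none
              intro t ht
              exact hocc t (Fin.le_def.1 ht) (by rw [hSn]; exact t.isLt)
            rw [occ_succ_none hk hnext, ih]
            rw [if_neg (by omega : ¬ (i.val < k ∧ v < w)),
              if_neg (by simp [hvw2] : ¬ (i.val < k + 1 ∧ v < w))]
            have hfeq : (univ.filter (fun t : Fin n => t.val < k + 1 ∧ t ≠ i))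
                = (univ.filter (fun t : Fin n => t.val < k ∧ t ≠ i)) := by
              apply filter_congr
              intro t _
              constructor
              · rintro ⟨h1, h2⟩
                refine ⟨?_, h2⟩
                rcases Nat.lt_succ_iff_lt_or_eq.1 h1 with h | h
                · exact h
                · exact absurd (Fin.ext (h.trans hki) : t = i) h2
              · rintro ⟨h1, h2⟩; exact ⟨Nat.lt_succ_of_lt h1, h2⟩
            rw [hfeq]
        · -- another car's turn: it is lucky
          have hkne : (⟨k, hk⟩ : Fin n) ≠ i := fun h => hki (congrArg Fin.val h)
          have hfree : α ⟨k, hk⟩ ∉ occupiedAfter α k := by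
            rw [ih]
            intro hmem
            rcases mem_union.1 hmem with h | h
            · obtain ⟨t', ht', hval⟩ := mem_image.1 h
              simp only [mem_filter, mem_univ, true_and] at ht'
              have htne : t' ≠ (⟨k, hk⟩ : Fin n) := by
                intro h; rw [h] at ht'; exact absurd ht'.1 (by simp)
              have hv' : α t' = v := Good.inj_off hvw hG hval htne
              rcases hfib t' hv' with h1 | h1
              · -- t' = j, so α ⟨k⟩ = v too, so ⟨k⟩ ∈ {j, i}, ⟨k⟩ ≠ i so ⟨k⟩ = j = t'
                have hkv : α ⟨k, hk⟩ = v := by rw [← hval, hv']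
                rcases hfib _ hkv with h2 | h2
                · exact htne (h1.trans h2.symm)
                · exact hkne h2
              · exact (ht'.2 h1)
            · split_ifs at h with hcond
              · have : α ⟨k, hk⟩ = w := by simpa using h
                exact Good.not_w hG _ this
              · exact absurd h (notMem_empty _)
          have hnext : nextSpot (occupiedAfter α k) (α ⟨k, hk⟩) = some (α ⟨k, hk⟩) :=
            nextSpot_self hfree
          rw [occ_succ_some hk hnext, ih]
          have hfeq : (univ.filter (fun t : Fin n => t.val < k + 1 ∧ t ≠ i))
              = insert (⟨k, hk⟩ : Fin n) (univ.filter (fun t : Fin n => t.val < k ∧ t ≠ i)) := by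
            ext t
            simp only [mem_filter, mem_univ, true_and, mem_insert]
            constructor
            · rintro ⟨h1, h2⟩
              rcases Nat.lt_succ_iff_lt_or_eq.1 h1 with h | h
              · right; exact ⟨h, h2⟩
              · left; exact Fin.ext h
            · rintro (h | ⟨h1, h2⟩)
              · rw [h]; exact ⟨Nat.lt_succ_self k, hkne⟩
              · exact ⟨Nat.lt_succ_of_lt h1, h2⟩
          have hceq : (i.val < k + 1 ∧ v < w) ↔ (i.val < k ∧ v < w) := by
            constructor
            · rintro ⟨h1, h2⟩
              refine ⟨?_, h2⟩
              rcases Nat.lt_succ_iff_lt_or_eq.1 h1 with h | h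
              · exact h
              · exact absurd h.symm hki
            · rintro ⟨h1, h2⟩; exact ⟨Nat.lt_succ_of_lt h1, h2⟩
          rw [hfeq]
          by_cases hcond : i.val < k ∧ v < w
          · rw [if_pos hcond, if_pos (hceq.2 hcond), image_insert, insert_union]
          · rw [if_neg hcond, if_neg (fun h => hcond (hceq.1 h)), image_insert, insert_union]
      · rw [occ_succ_ge hk, ih]
        have hkn : n ≤ k := not_lt.1 hk
        have hfeq : (univ.filter (fun t : Fin n => t.val < k + 1 ∧ t ≠ i))
            = (univ.filter (fun t : Fin n => t.val < k ∧ t ≠ i)) := by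
          apply filter_congr
          intro t _
          have := t.isLt
          constructor
          · rintro ⟨h1, h2⟩; exact ⟨by omega, h2⟩
          · rintro ⟨h1, h2⟩; exact ⟨by omega, h2⟩
        have hceq : (i.val < k + 1 ∧ v < w) ↔ (i.val < k ∧ v < w) := by
          have := i.isLt
          constructor
          · rintro ⟨h1, h2⟩; exact ⟨by omega, h2⟩
          · rintro ⟨h1, h2⟩; exact ⟨by omega, h2⟩
        rw [hfeq]
        by_cases hcond : i.val < k ∧ v < w
        · rw [if_pos hcond, if_pos (hceq.2 hcond)]
        · rw [if_neg hcond, if_neg (fun h => hcond (hceq.1 h))]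
  -- conclude
  ext t
  simp only [mem_filter, mem_univ, true_and, mem_singleton]
  constructor
  · intro hunlucky
    by_contra htne
    apply hunlucky
    apply lucky_iff.2
    rw [main t.val]
    intro hmem
    rcases mem_union.1 hmem with h | h
    · obtain ⟨t', ht', hval⟩ := mem_image.1 h
      simp only [mem_filter, mem_univ, true_and] at ht'
      have htne' : t' ≠ t := by
        intro h; rw [h] at ht'; omega
      have hv' : α t' = v := Good.inj_off hvw hG hval htne'
      have htv : α t = v := by rw [← hval, hv']
      rcases hfib t' hv' with h1 | h1
      · rcases hfib t htv with h2 | h2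
        · exact htne' (h1.trans h2.symm)
        · exact htne h2
      · exact ht'.2 h1
    · split_ifs at h with hcond
      · have : α t = w := by simpa using h
        exact Good.not_w hG t this
      · exact absurd h (notMem_empty _)
  · intro hti
    rw [hti]
    intro hlucky
    have := lucky_iff.1 hlucky
    apply this
    rw [main i.val]
    apply mem_union_left
    refine mem_image.2 ⟨j, ?_, by rw [hjv, hiv]⟩
    simp only [mem_filter, mem_univ, true_and]
    exact ⟨Fin.lt_def.1 hji, ne_of_lt hji⟩

end Char2

section Forward
open Finset
variable {n : ℕ}

theorem good_of_unlucky_one {α : Fin n → Fin n}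
    (h : (univ.filter (fun t => ¬ carSpot α t = some (α t))).card = 1) :
    ∃ v w : Fin n, v ≠ w ∧ Good v w α := by
  obtain ⟨i, hi⟩ := Finset.card_eq_one.1 h
  have hmem : ∀ t : Fin n, (¬ carSpot α t = some (α t)) ↔ t = i := by
    intro t
    constructor
    · intro ht
      have : t ∈ univ.filter (fun t => ¬ carSpot α t = some (α t)) := by simp [ht]
      rw [hi] at this; simpa using this
    · intro ht
      have : t ∈ univ.filter (fun t => ¬ carSpot α t = some (α t)) := by
        rw [hi]; simp [ht]
      exact (mem_filter.1 this).2
  have F1 : ∀ t : Fin n, t ≠ i → carSpot α t = some (α t) := by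
    intro t ht
    by_contra hc
    exact ht ((hmem t).1 hc)
  have hiu : ¬ carSpot α i = some (α i) := (hmem i).2 rfl
  have F2 : ∀ t t' : Fin n, t ≠ i → t' ≠ i → α t = α t' → t = t' := by
    intro t t' ht ht' he
    apply carSpot_inj (F1 t ht)
    rw [he]; exact F1 t' ht'
  set v := α i with hv
  -- find j
  have hvocc : α i ∈ occupiedAfter α i.val := by
    by_contra hc
    exact hiu (lucky_iff.2 hc)
  obtain ⟨j, hjlt, hcj⟩ := mem_occupiedAfter.1 hvocc
  have hjne : j ≠ i := by
    intro h; rw [h] at hjlt; omega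
  have hjv : α j = v := by
    have := F1 j hjne
    rw [this] at hcj
    exact Option.some.inj hcj
  -- image
  have hinjA : Set.InjOn α (univ.erase i : Finset (Fin n)) := by
    intro t ht t' ht' he
    simp only [coe_erase, Set.mem_diff] at ht ht'
    exact F2 t t' (by simpa using ht.2) (by simpa using ht'.2) he
  have himg : univ.image α = (univ.erase i).image α := by
    apply Finset.Subset.antisymm
    · intro u hu
      obtain ⟨t, _, ht⟩ := mem_image.1 hu
      by_cases hti : t = i
      · refine mem_image.2 ⟨j, mem_erase.2 ⟨hjne, mem_univ j⟩, ?_⟩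
        rw [hjv, ← ht, hti]
      · exact mem_image.2 ⟨t, mem_erase.2 ⟨hti, mem_univ t⟩, ht⟩
    · exact image_subset_image (erase_subset _ _)
  have hcard : (univ.image α).card = n - 1 := by
    rw [himg, Finset.card_image_of_injOn hinjA, card_erase_of_mem (mem_univ i),
      card_univ, Fintype.card_fin]
  have hdiffne : (univ \ univ.image α).Nonempty := by
    rw [← card_pos, Finset.card_sdiff_of_subset (subset_univ _), card_univ, Fintype.card_fin, hcard]
    have : 0 < n := i.pos
    omega
  obtain ⟨w, hw⟩ := hdiffne
  have hwni : w ∉ univ.image α := (Finset.mem_sdiff.1 hw).2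
  have himgw : univ.image α = univ.erase w := by
    apply Finset.eq_of_subset_of_card_le
    · intro x hx
      exact mem_erase.2 ⟨fun h => hwni (h ▸ hx), mem_univ x⟩
    · rw [card_erase_of_mem (mem_univ w), card_univ, Fintype.card_fin, hcard]
  have hvw : v ≠ w := by
    intro h
    apply hwni
    rw [← h]
    exact mem_image_of_mem α (mem_univ i)
  -- fiber
  have hfib : univ.filter (fun t => α t = v) = {j, i} := by
    ext t
    simp only [mem_filter, mem_univ, true_and, mem_insert, mem_singleton]
    constructor
    · intro ht
      by_cases hti : t = i
      · right; exact hti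
      · left; exact F2 t j hti hjne (by rw [ht, hjv])
    · rintro (h | h)
      · rw [h]; exact hjv
      · rw [h]
  have hfibc : (univ.filter (fun t => α t = v)).card = 2 := by
    rw [hfib, card_insert_of_notMem (by simp [hjne]), card_singleton]
  -- order condition
  refine ⟨v, w, hvw, himgw, hfibc, ?_⟩
  intro t hvt htS
  refine ⟨i, ?_, rfl⟩
  have htne : t ≠ i := by
    intro h; rw [h] at hvt; exact lt_irrefl _ hvt
  rcases lt_or_ge t i with h | h
  · exact h
  have hilt : i < t := lt_of_le_of_ne h (fun hh => htne hh.symm)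
  exfalso
  -- t is lucky, its spot is free at time i
  have htl := F1 t htne
  have htfree : α t ∉ occupiedAfter α t.val := (nextSpot_some htl).2.1
  have htfreei : α t ∉ occupiedAfter α i.val := by
    intro hc
    exact htfree (occupiedAfter_mono (le_of_lt (Fin.lt_def.1 hilt)) hc)
  obtain ⟨x, hx⟩ := nextSpot_isSome (le_of_lt hvt) htfreei
  obtain ⟨hx1, hx2, hx3⟩ := nextSpot_some hx
  have hcsi : carSpot α i = some x := hx
  have hxv : x ≠ v := by
    intro hh
    apply hiu
    rw [hcsi, hh, hv]
  have hvx : v < x := lt_of_le_of_ne hx1 (fun hh => hxv hh.symm)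
  have hxt : x ≤ α t := hx3 (α t) (le_of_lt hvt) htfreei
  have hxS : (x : ℕ) < Sv n v w := lt_of_le_of_lt (Fin.le_def.1 hxt) htS
  have hxw : x ≠ w := by
    intro hh
    unfold Sv at hxS
    split_ifs at hxS with hvw2
    · rw [hh] at hxS; omega
    · have hwv : w < v := lt_of_le_of_ne (not_lt.1 hvw2) (fun h2 => hvw h2.symm)
      rw [hh] at hvx
      exact absurd (hwv.trans hvx) (lt_irrefl w)
  have hxim : x ∈ univ.image α := by
    rw [himgw]; exact mem_erase.2 ⟨hxw, mem_univ x⟩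
  obtain ⟨c, _, hc⟩ := mem_image.1 hxim
  have hcne : c ≠ i := by
    intro hh; rw [hh, ← hv] at hc; exact hxv hc.symm
  have hcl := F1 c hcne
  rw [hc] at hcl
  exact hcne (carSpot_inj hcl hcsi)

theorem good_unique {α : Fin n → Fin n} {v w v' w' : Fin n}
    (hvw : v ≠ w) (hG : Good v w α) (hvw' : v' ≠ w') (hG' : Good v' w' α) :
    v = v' ∧ w = w' := by
  have hww : w = w' := by
    have h1 := hG.1
    have h2 := hG'.1
    rw [h1] at h2
    by_contra hne
    have : w ∈ univ.erase w' := mem_erase.2 ⟨hne, mem_univ w⟩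
    rw [← h2] at this
    exact absurd (mem_erase.1 this).1 (by simp)
  refine ⟨?_, hww⟩
  by_contra hne
  have h1 := Good.fiber_le_one hG.1 hG.2.1 hvw (fun h => hne h.symm)
  have h2 := hG'.2.1
  omega

end Forward

section Count
open Finset
variable {n : ℕ}

def Vset (n : ℕ) (v w : Fin n) : Finset (Fin n) :=
  univ.filter (fun u => ((v : ℕ) ≤ (u : ℕ) ∧ (u : ℕ) < Sv n v w) ∨ u = w)

def relSet (f : Fin n → Fin n) (V : Finset (Fin n)) : Finset (Fin n) :=
  univ.filter (fun t => f t ∈ V)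

theorem w_mem_Vset (v w : Fin n) : w ∈ Vset n v w := by
  simp [Vset]

theorem v_mem_Vset (v w : Fin n) : v ∈ Vset n v w := by
  simp only [Vset, mem_filter, mem_univ, true_and]
  exact Or.inl ⟨le_refl _, v_lt_Sv v w⟩

theorem card_Vset (v w : Fin n) (hvw : v ≠ w) :
    (Vset n v w).card = Sv n v w - (v : ℕ) + 1 := by
  have hwrange : ¬ ((v : ℕ) ≤ (w : ℕ) ∧ (w : ℕ) < Sv n v w) := by
    unfold Sv
    split_ifs with h
    · rintro ⟨_, h2⟩; omega
    · have : w < v := lt_of_le_of_ne (not_lt.1 h) (fun hh => hvw hh.symm)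
      rintro ⟨h1, _⟩
      exact absurd h1 (not_le.2 (Fin.lt_def.1 this))
  have hsplit : Vset n v w =
      insert w (univ.filter (fun u : Fin n => (v : ℕ) ≤ (u : ℕ) ∧ (u : ℕ) < Sv n v w)) := by
    ext u
    simp only [Vset, mem_filter, mem_univ, true_and, mem_insert]
    tauto
  have hwnot : w ∉ univ.filter (fun u : Fin n => (v : ℕ) ≤ (u : ℕ) ∧ (u : ℕ) < Sv n v w) := by
    simp only [mem_filter, mem_univ, true_and]
    exact hwrange
  have hc2 : (univ.filter (fun u : Fin n => (v : ℕ) ≤ (u : ℕ) ∧ (u : ℕ) < Sv n v w)).card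
      = Sv n v w - (v : ℕ) := by
    have hb := Finset.card_bij (s := univ.filter (fun u : Fin n => (v : ℕ) ≤ (u : ℕ) ∧ (u : ℕ) < Sv n v w))
      (t := Finset.Ico (v : ℕ) (Sv n v w)) (fun u _ => (u : ℕ))
      (fun u hu => by
        simp only [mem_filter, mem_univ, true_and] at hu
        simp [Finset.mem_Ico, hu.1, hu.2])
      (fun a _ b _ hab => Fin.ext hab)
      (fun a ha => by
        simp only [Finset.mem_Ico] at ha
        have han : a < n := lt_of_lt_of_le ha.2 (Sv_le v w)
        exact ⟨⟨a, han⟩, mem_filter.2 ⟨mem_univ _, ha.1, ha.2⟩, rfl⟩)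
    rw [hb, Nat.card_Ico]
  rw [hsplit, card_insert_of_notMem hwnot, hc2]

theorem card_perms :
    (univ.filter (fun f : Fin n → Fin n => Function.Bijective f)).card = n.factorial := by
  have h : (univ : Finset (Equiv.Perm (Fin n))).card
      = (univ.filter (fun f : Fin n → Fin n => Function.Bijective f)).card := by
    apply Finset.card_bij (fun (σ : Equiv.Perm (Fin n)) _ => (σ : Fin n → Fin n))
    · intro σ _
      simp only [mem_filter, mem_univ, true_and]
      exact σ.bijective
    · intro a _ b _ hab
      exact Equiv.coe_fn_injective hab
    · intro f hf
      simp only [mem_filter, mem_univ, true_and] at hf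
      exact ⟨Equiv.ofBijective f hf, mem_univ _, rfl⟩
  rw [← h, Finset.card_univ, Fintype.card_perm, Fintype.card_fin]

theorem max'_congr' {s s' : Finset (Fin n)} (hs : s.Nonempty) (hs' : s'.Nonempty)
    (h : s = s') : s.max' hs = s'.max' hs' := by
  subst h; rfl

-- The "A_u" sets
def Aset (n : ℕ) (V : Finset (Fin n)) (u : Fin n) : Finset (Fin n → Fin n) :=
  univ.filter (fun f => Function.Bijective f ∧
    ∀ h : (relSet f V).Nonempty, f ((relSet f V).max' h) = u)

theorem relSet_nonempty {f : Fin n → Fin n} {V : Finset (Fin n)}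
    (hf : Function.Bijective f) (hV : V.Nonempty) : (relSet f V).Nonempty := by
  obtain ⟨x, hx⟩ := hV
  obtain ⟨t, ht⟩ := hf.2 x
  exact ⟨t, by simp [relSet, ht, hx]⟩

theorem Aset_card_eq {V : Finset (Fin n)} {u u' : Fin n} (hu : u ∈ V) (hu' : u' ∈ V) :
    (Aset n V u).card = (Aset n V u').card := by
  have hswapV : ∀ (a b : Fin n), a ∈ V → b ∈ V → ∀ x : Fin n, (Equiv.swap a b) x ∈ V ↔ x ∈ V := by
    intro a b ha hb x
    rcases eq_or_ne x a with h | h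
    · rw [h, Equiv.swap_apply_left]; exact ⟨fun _ => ha, fun _ => hb⟩
    rcases eq_or_ne x b with h2 | h2
    · rw [h2, Equiv.swap_apply_right]; exact ⟨fun _ => hb, fun _ => ha⟩
    · rw [Equiv.swap_apply_of_ne_of_ne h h2]
  have key : ∀ (a b : Fin n), a ∈ V → b ∈ V → ∀ f ∈ Aset n V a,
      (Equiv.swap a b) ∘ f ∈ Aset n V b := by
    intro a b ha hb f hf
    simp only [Aset, mem_filter, mem_univ, true_and] at hf ⊢
    obtain ⟨hbij, hmax⟩ := hf
    have hrel : relSet ((Equiv.swap a b) ∘ f) V = relSet f V := by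
      ext t
      simp only [relSet, mem_filter, mem_univ, true_and, Function.comp_apply]
      exact hswapV a b ha hb (f t)
    refine ⟨(Equiv.swap a b).bijective.comp hbij, ?_⟩
    intro h
    have h2 : (relSet f V).Nonempty := hrel ▸ h
    have hm : (relSet ((Equiv.swap a b) ∘ f) V).max' h = (relSet f V).max' h2 :=
      max'_congr' h h2 hrel
    rw [hm]
    simp only [Function.comp_apply]
    rw [hmax h2, Equiv.swap_apply_left]
  apply Finset.card_bij' (fun f _ => (Equiv.swap u u') ∘ f) (fun f _ => (Equiv.swap u u') ∘ f)
  · intro f hf; exact key u u' hu hu' f hf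
  · intro f hf
    have := key u' u hu' hu f hf
    rwa [Equiv.swap_comm] at this
  · intro f _
    funext t
    simp [Equiv.swap_apply_self]
  · intro f _
    funext t
    simp [Equiv.swap_apply_self]

theorem perm_partition (V : Finset (Fin n)) (hV : V.Nonempty) :
    univ.filter (fun f : Fin n → Fin n => Function.Bijective f) = V.biUnion (Aset n V) := by
  ext f
  simp only [mem_filter, mem_univ, true_and, mem_biUnion]
  constructor
  · intro hbij
    have hne : (relSet f V).Nonempty := relSet_nonempty hbij hV
    set u := f ((relSet f V).max' hne) with hu
    have humem : u ∈ V := by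
      have := Finset.max'_mem _ hne
      simp only [relSet, mem_filter] at this
      exact this.2
    refine ⟨u, humem, ?_⟩
    refine mem_filter.2 ⟨mem_univ f, hbij, fun h => ?_⟩
    rw [hu]
  · rintro ⟨u, _, hf⟩
    exact (mem_filter.1 hf).2.1

theorem Aset_card (V : Finset (Fin n)) (hV : V.Nonempty) {w : Fin n} (hw : w ∈ V) :
    (Aset n V w).card * V.card = n.factorial := by
  have hdisj : ∀ u ∈ V, ∀ u' ∈ V, u ≠ u' → Disjoint (Aset n V u) (Aset n V u') := by
    intro u hu u' hu' hne
    rw [Finset.disjoint_left]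
    intro f hf hf'
    simp only [Aset, mem_filter, mem_univ, true_and] at hf hf'
    have hne2 : (relSet f V).Nonempty := relSet_nonempty hf.1 hV
    exact hne ((hf.2 hne2).symm.trans (hf'.2 hne2))
  have := card_perms (n := n)
  rw [perm_partition V hV, Finset.card_biUnion hdisj] at this
  rw [← this]
  have hconst : ∀ u ∈ V, (Aset n V u).card = (Aset n V w).card :=
    fun u hu => Aset_card_eq hu hw
  rw [Finset.sum_congr rfl hconst, Finset.sum_const, smul_eq_mul, mul_comm]

end Count

section Bij
open Finset
variable {n : ℕ}

def toPerm (v w : Fin n) (α : Fin n → Fin n) : Fin n → Fin n :=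
  fun t => if (α t = v ∧ ∀ t', α t' = v → t' ≤ t) then w else α t

def fromPerm (v w : Fin n) (f : Fin n → Fin n) : Fin n → Fin n :=
  fun t => if f t = w then v else f t

theorem good_card_eq (v w : Fin n) (hvw : v ≠ w) :
    (univ.filter (Good v w)).card = (Aset n (Vset n v w) w).card := by
  have hVne : (Vset n v w).Nonempty := ⟨w, w_mem_Vset v w⟩
  apply Finset.card_bij' (fun α _ => toPerm v w α) (fun f _ => fromPerm v w f)
  · -- toPerm maps Good into Aset
    intro α hα
    have hG : Good v w α := (mem_filter.1 hα).2
    obtain ⟨j, i, hji, hjv, hiv, hfib, himax⟩ := Good.exists_pair hvw hG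
    have hcond : ∀ t : Fin n, (α t = v ∧ ∀ t', α t' = v → t' ≤ t) ↔ t = i := by
      intro t
      constructor
      · rintro ⟨h1, h2⟩
        rcases hfib t h1 with h | h
        · exfalso
          have := h2 i hiv
          rw [h] at this
          exact absurd hji (not_lt.2 this)
        · exact h
      · rintro rfl
        refine ⟨hiv, fun t' ht' => ?_⟩
        rcases hfib t' ht' with h | h
        · rw [h]; exact le_of_lt hji
        · rw [h]
    have hΦ : toPerm v w α = fun t => if t = i then w else α t := by
      funext t
      unfold toPerm
      by_cases h : t = i
      · rw [if_pos ((hcond t).2 h), if_pos h]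
      · rw [if_neg (fun hh => h ((hcond t).1 hh)), if_neg h]
    have hrelT : relSet (toPerm v w α) (Vset n v w) = Tset α v w := by
      ext t
      rw [hΦ]
      simp only [relSet, Tset, mem_filter, mem_univ, true_and]
      by_cases h : t = i
      · rw [if_pos h]
        subst h
        simp only [w_mem_Vset, true_iff]
        exact ⟨le_of_eq hiv.symm, by rw [hiv]; exact v_lt_Sv v w⟩
      · rw [if_neg h]
        simp only [Vset, mem_filter, mem_univ, true_and]
        constructor
        · rintro (⟨h1, h2⟩ | h1)
          · exact ⟨Fin.le_def.2 h1, h2⟩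
          · exact absurd h1 (Good.not_w hG t)
        · rintro ⟨h1, h2⟩
          exact Or.inl ⟨Fin.le_def.1 h1, h2⟩
    have hinj : Function.Injective (toPerm v w α) := by
      intro t t' he
      rw [hΦ] at he
      simp only at he
      by_cases h : t = i <;> by_cases h' : t' = i
      · rw [h, h']
      · rw [if_pos h, if_neg h'] at he
        exact absurd he.symm (Good.not_w hG t')
      · rw [if_neg h, if_pos h'] at he
        exact absurd he (Good.not_w hG t)
      · rw [if_neg h, if_neg h'] at he
        by_contra hne
        have hv := Good.inj_off hvw hG he hne
        rcases hfib t hv with h1 | h1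
        · rcases hfib t' (by rw [← he]; exact hv) with h2 | h2
          · exact hne (h1.trans h2.symm)
          · exact h' h2
        · exact h h1
    have hbij : Function.Bijective (toPerm v w α) := Finite.injective_iff_bijective.1 hinj
    refine mem_filter.2 ⟨mem_univ _, hbij, fun h => ?_⟩
    have hTne : (Tset α v w).Nonempty := hrelT ▸ h
    have hmeq : (relSet (toPerm v w α) (Vset n v w)).max' h = (Tset α v w).max' hTne :=
      max'_congr' h hTne hrelT
    have hmaxi : (Tset α v w).max' hTne = i := by
      apply le_antisymm
      · exact himax _ (Finset.max'_mem _ hTne)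
      · apply Finset.le_max'
        simp only [Tset, mem_filter, mem_univ, true_and, hiv]
        exact ⟨le_refl v, v_lt_Sv v w⟩
    rw [hmeq, hmaxi, hΦ]
    simp
  · -- fromPerm maps Aset into Good
    intro f hf
    obtain ⟨hbij, hmaxw⟩ := (mem_filter.1 hf).2
    have hne : (relSet f (Vset n v w)).Nonempty := relSet_nonempty hbij hVne
    set M := (relSet f (Vset n v w)).max' hne with hM
    have hfM : f M = w := hmaxw hne
    refine mem_filter.2 ⟨mem_univ _, ?_, ?_, ?_⟩
    · -- image
      ext u
      simp only [mem_image, mem_univ, true_and, mem_erase, and_true]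
      constructor
      · rintro ⟨t, ht⟩
        unfold fromPerm at ht
        split_ifs at ht with h
        · rw [← ht]; exact hvw
        · rw [← ht]; exact h
      · intro hu
        obtain ⟨t, ht⟩ := hbij.2 u
        refine ⟨t, ?_⟩
        unfold fromPerm
        rw [if_neg (by rw [ht]; exact hu), ht]
      -- fiber
    · obtain ⟨a, ha⟩ := hbij.2 v
      have hab : a ≠ M := by
        intro h; rw [h, hfM] at ha; exact hvw ha.symm
      have hfilter : univ.filter (fun t => fromPerm v w f t = v) = {a, M} := by
        ext t
        simp only [mem_filter, mem_univ, true_and, mem_insert, mem_singleton]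
        unfold fromPerm
        split_ifs with h
        · simp only [true_iff]
          right
          exact hbij.1 (h.trans hfM.symm)
        · constructor
          · intro ht
            left
            exact hbij.1 (ht.trans ha.symm)
          · rintro (rfl | rfl)
            · exact ha
            · exact absurd hfM h
      rw [hfilter, card_insert_of_notMem (by simp [hab]), card_singleton]
    · -- order condition
      intro t hvt htS
      have hftw : f t ≠ w := by
        intro h
        unfold fromPerm at hvt
        rw [if_pos h] at hvt
        exact lt_irrefl v hvt
      have hft : fromPerm v w f t = f t := by unfold fromPerm; rw [if_neg hftw]
      have htrel : t ∈ relSet f (Vset n v w) := by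
        refine mem_filter.2 ⟨mem_univ _, mem_filter.2 ⟨mem_univ _, Or.inl ⟨?_, ?_⟩⟩⟩
        · rw [← hft]; exact Fin.le_def.1 (le_of_lt hvt)
        · rw [← hft]; exact htS
      have htM : t ≤ M := Finset.le_max' _ t htrel
      have htne : t ≠ M := by
        intro h; rw [← h] at hfM; exact hftw hfM
      refine ⟨M, lt_of_le_of_ne htM htne, ?_⟩
      unfold fromPerm
      rw [if_pos hfM]
  · -- left inverse
    intro α hα
    have hG : Good v w α := (mem_filter.1 hα).2
    obtain ⟨j, i, hji, hjv, hiv, hfib, himax⟩ := Good.exists_pair hvw hG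
    have hcond : ∀ t : Fin n, (α t = v ∧ ∀ t', α t' = v → t' ≤ t) ↔ t = i := by
      intro t
      constructor
      · rintro ⟨h1, h2⟩
        rcases hfib t h1 with h | h
        · exfalso
          have := h2 i hiv
          rw [h] at this
          exact absurd hji (not_lt.2 this)
        · exact h
      · rintro rfl
        refine ⟨hiv, fun t' ht' => ?_⟩
        rcases hfib t' ht' with h | h
        · rw [h]; exact le_of_lt hji
        · rw [h]
    funext t
    unfold fromPerm toPerm
    by_cases h : t = i
    · rw [if_pos ((hcond t).2 h), if_pos rfl, h, hiv]
    · rw [if_neg (fun hh => h ((hcond t).1 hh)), if_neg (Good.not_w hG t)]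
  · -- right inverse
    intro f hf
    obtain ⟨hbij, hmaxw⟩ := (mem_filter.1 hf).2
    have hne : (relSet f (Vset n v w)).Nonempty := relSet_nonempty hbij hVne
    set M := (relSet f (Vset n v w)).max' hne with hM
    have hfM : f M = w := hmaxw hne
    have hgv : ∀ t, fromPerm v w f t = v ↔ (t = M ∨ f t = v) := by
      intro t
      unfold fromPerm
      split_ifs with h
      · simp only [true_iff]
        left
        exact hbij.1 (h.trans hfM.symm)
      · constructor
        · intro ht; right; exact ht
        · rintro (rfl | ht)
          · exact absurd hfM h
          · exact ht
    have hcond : ∀ t : Fin n, (fromPerm v w f t = v ∧ ∀ t', fromPerm v w f t' = v → t' ≤ t)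
        ↔ t = M := by
      intro t
      constructor
      · rintro ⟨h1, h2⟩
        rcases (hgv t).1 h1 with h | h
        · exact h
        · -- t is the v-preimage; M also satisfies g M = v, so M ≤ t ≤ M
          have hMv : fromPerm v w f M = v := by unfold fromPerm; rw [if_pos hfM]
          have hMt := h2 M hMv
          have htM : t ≤ M := by
            have htrel : t ∈ relSet f (Vset n v w) := by
              refine mem_filter.2 ⟨mem_univ _, mem_filter.2 ⟨mem_univ _,
                Or.inl ⟨by rw [h], by rw [h]; exact v_lt_Sv v w⟩⟩⟩
            exact Finset.le_max' _ t htrel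
          exact le_antisymm htM hMt
      · rintro rfl
        refine ⟨by unfold fromPerm; rw [if_pos hfM], fun t' ht' => ?_⟩
        rcases (hgv t').1 ht' with h | h
        · rw [h]
        · have : t' ∈ relSet f (Vset n v w) := by
            refine mem_filter.2 ⟨mem_univ _, mem_filter.2 ⟨mem_univ _,
              Or.inl ⟨by rw [h], by rw [h]; exact v_lt_Sv v w⟩⟩⟩
          exact Finset.le_max' _ t' this
    funext t
    unfold toPerm
    by_cases h : t = M
    · rw [if_pos ((hcond t).2 h), h, hfM]
    · rw [if_neg (fun hh => h ((hcond t).1 hh))]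
      unfold fromPerm
      rw [if_neg (fun hh => h (hbij.1 (hh.trans hfM.symm)))]

theorem good_card_mul (v w : Fin n) (hvw : v ≠ w) :
    (univ.filter (Good v w)).card * (Sv n v w - (v : ℕ) + 1) = n.factorial := by
  rw [good_card_eq v w hvw, ← card_Vset v w hvw]
  exact Aset_card (Vset n v w) ⟨w, w_mem_Vset v w⟩ (w_mem_Vset v w)

end Bij

section Sums
open Finset

noncomputable def Tr (m : ℕ) : ℝ := ∑ c ∈ Finset.range m, (1 : ℝ) / (c + 2)

theorem H_succ (n : ℕ) : H (n + 1) = H n + 1 / (n + 1) := by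
  unfold H
  rw [Finset.sum_Icc_succ_top (by omega : 1 ≤ n + 1)]
  push_cast
  ring

theorem Tr_eq (n : ℕ) : Tr n = H (n + 1) - 1 := by
  induction n with
  | zero => simp [Tr, H]
  | succ n ih =>
    unfold Tr at ih ⊢
    rw [Finset.sum_range_succ, ih, H_succ (n + 1)]
    push_cast
    ring

noncomputable def S2 (n : ℕ) : ℝ := ∑ c ∈ Finset.range n, ((n : ℝ) - 1 - c) / (c + 2)

theorem S2_succ (n : ℕ) : S2 (n + 1) = S2 n + Tr n := by
  unfold S2 Tr
  rw [Finset.sum_range_succ]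
  have hlast : ((n + 1 : ℕ) : ℝ) - 1 - (n : ℝ) = 0 := by push_cast; ring
  rw [hlast, zero_div, add_zero, ← Finset.sum_add_distrib]
  apply Finset.sum_congr rfl
  intro c _
  rw [← add_div]
  push_cast
  ring_nf

theorem S2_eq (n : ℕ) : S2 n = ((n : ℝ) + 1) * H n - 2 * n := by
  induction n with
  | zero => simp [S2, H]
  | succ n ih =>
    rw [S2_succ, ih, Tr_eq, H_succ]
    have h : (n : ℝ) + 1 ≠ 0 := by positivity
    push_cast
    field_simp
    ring

theorem S1_eq (n : ℕ) : ∑ a ∈ Finset.range n, Tr a = S2 n := by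
  induction n with
  | zero => simp [S2]
  | succ n ih =>
    rw [Finset.sum_range_succ, ih, S2_succ]

-- the "A" sum
theorem sumA (n : ℕ) :
    ∑ a ∈ Finset.range n, ∑ b ∈ Finset.range n,
      (if a < b then (1 : ℝ) / ((b - a : ℕ) + 1) else 0) = S2 n := by
  have hinner : ∀ a, a < n → ∑ b ∈ Finset.range n,
      (if a < b then (1 : ℝ) / ((b - a : ℕ) + 1) else 0) = Tr (n - 1 - a) := by
    intro a _
    rw [← Finset.sum_filter]
    have hfil : (Finset.range n).filter (fun b => a < b) = Finset.Ico (a + 1) n := by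
      ext b
      simp only [Finset.mem_filter, Finset.mem_range, Finset.mem_Ico]
      omega
    rw [hfil, Finset.sum_Ico_eq_sum_range]
    have : n - (a + 1) = n - 1 - a := by omega
    rw [this]
    unfold Tr
    apply Finset.sum_congr rfl
    intro c _
    have h1 : (a + 1 + c - a : ℕ) = c + 1 := by omega
    rw [h1]
    push_cast
    ring_nf
  rw [Finset.sum_congr rfl (fun a ha => hinner a (Finset.mem_range.1 ha))]
  rw [← S1_eq]
  exact Finset.sum_range_reflect (fun j => Tr j) n

-- the "B" sum
theorem sumB (n : ℕ) :
    ∑ a ∈ Finset.range n, (a : ℝ) * ((1 : ℝ) / ((n - a : ℕ) + 1)) = S2 n := by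
  rw [← Finset.sum_range_reflect]
  unfold S2
  apply Finset.sum_congr rfl
  intro a ha
  rw [Finset.mem_range] at ha
  have h1 : (n - (n - 1 - a) : ℕ) = a + 1 := by omega
  rw [h1]
  have h2 : ((n - 1 - a : ℕ) : ℝ) = (n : ℝ) - 1 - a := by
    have : (n - 1 - a : ℕ) + a + 1 = n := by omega
    have hc := congrArg (fun x : ℕ => (x : ℝ)) this
    push_cast at hc
    linarith
  rw [h2]
  push_cast
  ring

end Sums

section Main
open Finset

theorem count_lt_sum {c : ℝ} {a n : ℕ} (h : a ≤ n) :
    ∑ b ∈ Finset.range n, (if b < a then c else 0) = (a : ℝ) * c := by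
  rw [← Finset.sum_filter]
  have hf : (Finset.range n).filter (fun b => b < a) = Finset.range a := by
    ext b
    simp only [Finset.mem_filter, Finset.mem_range]
    omega
  rw [hf, Finset.sum_const, Finset.card_range, nsmul_eq_mul]


/-- For every `n ≥ 2`, the number of preference lists in `[n]^n` with exactly `n-1`
lucky cars equals `n! * (2(n+1)Hₙ - 4n)`, the total number of pivot comparisons made
by Quicksort over all `n!` orderings of an array of size `n`. -/
theorem luckyL_eq_quicksort_comparisons (n : ℕ) (hn : 2 ≤ n) :
    (luckyL n : ℝ) = (Nat.factorial n : ℝ) * (2 * ((n : ℝ) + 1) * H n - 4 * n) := by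
  have hcount : ∀ α : Fin n → Fin n,
      ((luckyCount α : ℤ) = (n : ℤ) - 1 ↔
        (univ.filter (fun t => ¬ carSpot α t = some (α t))).card = 1) := by
    intro α
    have hsplit := Finset.card_filter_add_card_filter_not
      (s := (univ : Finset (Fin n))) (p := fun i => carSpot α i = some (α i))
    rw [card_univ, Fintype.card_fin] at hsplit
    unfold luckyCount
    constructor <;> intro h <;> omega
  have hset : (univ.filter (fun α : Fin n → Fin n => (luckyCount α : ℤ) = (n : ℤ) - 1))
      = ((univ ×ˢ univ).filter (fun p : Fin n × Fin n => p.1 ≠ p.2)).biUnion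
          (fun p => univ.filter (Good p.1 p.2)) := by
    ext α
    constructor
    · intro h
      have h1 := (mem_filter.1 h).2
      obtain ⟨v, w, hvw, hG⟩ := good_of_unlucky_one ((hcount α).1 h1)
      refine mem_biUnion.2 ⟨(v, w), ?_, mem_filter.2 ⟨mem_univ _, hG⟩⟩
      exact mem_filter.2 ⟨mem_product.2 ⟨mem_univ _, mem_univ _⟩, hvw⟩
    · intro h
      obtain ⟨p, hp, hα⟩ := mem_biUnion.1 h
      have hne : p.1 ≠ p.2 := (mem_filter.1 hp).2
      have hG : Good p.1 p.2 α := (mem_filter.1 hα).2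
      obtain ⟨i, hi⟩ := Good.unlucky_eq hne hG
      refine mem_filter.2 ⟨mem_univ _, (hcount α).2 ?_⟩
      rw [hi, card_singleton]
  have hdisj : ∀ p ∈ ((univ ×ˢ univ).filter (fun p : Fin n × Fin n => p.1 ≠ p.2)),
      ∀ q ∈ ((univ ×ˢ univ).filter (fun p : Fin n × Fin n => p.1 ≠ p.2)), p ≠ q →
      Disjoint (univ.filter (Good p.1 p.2)) (univ.filter (Good q.1 q.2)) := by
    intro p hp q hq hpq
    rw [Finset.disjoint_left]
    intro α hα1 hα2
    have hG1 : Good p.1 p.2 α := (mem_filter.1 hα1).2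
    have hG2 : Good q.1 q.2 α := (mem_filter.1 hα2).2
    have hne1 : p.1 ≠ p.2 := (mem_filter.1 hp).2
    have hne2 : q.1 ≠ q.2 := (mem_filter.1 hq).2
    obtain ⟨h1, h2⟩ := good_unique hne1 hG1 hne2 hG2
    exact hpq (Prod.ext h1 h2)
  have hLsum : luckyL n = ∑ p ∈ ((univ ×ˢ univ).filter (fun p : Fin n × Fin n => p.1 ≠ p.2)),
      (univ.filter (Good p.1 p.2)).card := by
    unfold luckyL
    rw [hset]
    exact card_biUnion hdisj
  have hterm : ∀ p ∈ ((univ ×ˢ univ).filter (fun p : Fin n × Fin n => p.1 ≠ p.2)),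
      (((univ.filter (Good p.1 p.2)).card : ℝ))
        = (n.factorial : ℝ) / ((Sv n p.1 p.2 - (p.1 : ℕ) + 1 : ℕ) : ℝ) := by
    intro p hp
    have hne : p.1 ≠ p.2 := (mem_filter.1 hp).2
    have hmul := good_card_mul p.1 p.2 hne
    have hD : (0 : ℝ) < ((Sv n p.1 p.2 - (p.1 : ℕ) + 1 : ℕ) : ℝ) := by
      have h0 : 0 < (Sv n p.1 p.2 - (p.1 : ℕ) + 1 : ℕ) := Nat.succ_pos _
      exact_mod_cast h0
    rw [eq_div_iff (ne_of_gt hD)]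
    exact_mod_cast hmul
  rw [hLsum, Nat.cast_sum, Finset.sum_congr rfl hterm, Finset.sum_filter]
  have hpt : ∀ p ∈ (univ ×ˢ univ : Finset (Fin n × Fin n)),
      (if p.1 ≠ p.2 then (n.factorial : ℝ) / ((Sv n p.1 p.2 - (p.1 : ℕ) + 1 : ℕ) : ℝ) else 0)
      = (n.factorial : ℝ) *
        ((if (p.1 : ℕ) < (p.2 : ℕ) then (1 : ℝ) / ((((p.2 : ℕ) - (p.1 : ℕ) : ℕ) : ℝ) + 1) else 0)
        + (if (p.2 : ℕ) < (p.1 : ℕ) then (1 : ℝ) / (((n - (p.1 : ℕ) : ℕ) : ℝ) + 1) else 0)) := by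
    intro p _
    rcases lt_trichotomy p.1 p.2 with hlt | heq | hgt
    · have hlt' := Fin.lt_def.1 hlt
      rw [if_pos (ne_of_lt hlt), if_pos hlt', if_neg (by omega), add_zero]
      unfold Sv
      rw [if_pos hlt]
      push_cast
      ring
    · have hval : (p.1 : ℕ) = (p.2 : ℕ) := congrArg Fin.val heq
      rw [if_neg (fun hh => hh heq), if_neg (by omega : ¬ (p.1 : ℕ) < (p.2 : ℕ)),
        if_neg (by omega : ¬ (p.2 : ℕ) < (p.1 : ℕ))]
      simp
    · have hgt' := Fin.lt_def.1 hgt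
      rw [if_pos (ne_of_gt hgt), if_neg (by omega), if_pos hgt', zero_add]
      unfold Sv
      rw [if_neg (not_lt.2 (le_of_lt hgt))]
      push_cast
      ring
  rw [Finset.sum_congr rfl hpt, ← Finset.mul_sum, Finset.sum_add_distrib]
  have hA : ∑ p ∈ (univ ×ˢ univ : Finset (Fin n × Fin n)),
      (if (p.1 : ℕ) < (p.2 : ℕ) then (1 : ℝ) / ((((p.2 : ℕ) - (p.1 : ℕ) : ℕ) : ℝ) + 1) else 0)
      = S2 n := by
    rw [Finset.sum_product]
    have h1 : ∀ v : Fin n, ∑ w : Fin n,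
        (if (v : ℕ) < (w : ℕ) then (1 : ℝ) / ((((w : ℕ) - (v : ℕ) : ℕ) : ℝ) + 1) else 0)
        = ∑ b ∈ Finset.range n,
          (if (v : ℕ) < b then (1 : ℝ) / (((b - (v : ℕ) : ℕ) : ℝ) + 1) else 0) := by
      intro v
      exact Fin.sum_univ_eq_sum_range
        (fun b => if (v : ℕ) < b then (1 : ℝ) / (((b - (v : ℕ) : ℕ) : ℝ) + 1) else 0) n
    rw [Finset.sum_congr rfl (fun v _ => h1 v)]
    have h2 := Fin.sum_univ_eq_sum_range
      (fun a => ∑ b ∈ Finset.range n,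
        (if a < b then (1 : ℝ) / (((b - a : ℕ) : ℝ) + 1) else 0)) n
    rw [h2]
    exact sumA n
  have hB : ∑ p ∈ (univ ×ˢ univ : Finset (Fin n × Fin n)),
      (if (p.2 : ℕ) < (p.1 : ℕ) then (1 : ℝ) / (((n - (p.1 : ℕ) : ℕ) : ℝ) + 1) else 0)
      = S2 n := by
    rw [Finset.sum_product]
    have h1 : ∀ v : Fin n, ∑ w : Fin n,
        (if (w : ℕ) < (v : ℕ) then (1 : ℝ) / (((n - (v : ℕ) : ℕ) : ℝ) + 1) else 0)
        = ((v : ℕ) : ℝ) * ((1 : ℝ) / (((n - (v : ℕ) : ℕ) : ℝ) + 1)) := by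
      intro v
      have := Fin.sum_univ_eq_sum_range
        (fun b => if b < (v : ℕ) then (1 : ℝ) / (((n - (v : ℕ) : ℕ) : ℝ) + 1) else 0) n
      rw [this]
      exact count_lt_sum (le_of_lt v.isLt)
    rw [Finset.sum_congr rfl (fun v _ => h1 v)]
    have h2 := Fin.sum_univ_eq_sum_range
      (fun a => (a : ℝ) * ((1 : ℝ) / (((n - a : ℕ) : ℝ) + 1))) n
    rw [h2]
    exact sumB n
  rw [hA, hB, S2_eq]
  ring

end Main
end

section
/- For n ≥ 2, let N_n be the set of preference lists α = (p₁,…,pₙ) ∈ [n]^n with exactly n−1 lucky cars in which car 1 is not a competing car, i.e., p₁ ≠ p_j for all j ≥ 2. Then |N_n| = n·L_{n−1}, where L_{n−1} is the number of preference lists in [n−1]^{n−1} with exactly n−2 lucky cars. -/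
open Finset

namespace ParkAux

variable {m : ℕ}

def phi (s : Fin (m + 1)) (q : Fin m) : Fin (m + 1) :=
  if q.val < s.val then ⟨q.val, by omega⟩ else ⟨q.val + 1, by have := q.isLt; omega⟩

lemma phi_val (s : Fin (m + 1)) (q : Fin m) :
    (phi s q).val = if q.val < s.val then q.val else q.val + 1 := by
  unfold phi; split <;> rfl

lemma phi_ne (s : Fin (m + 1)) (q : Fin m) : phi s q ≠ s := by
  intro h
  have h2 := phi_val s q
  rw [h] at h2
  revert h2; split <;> omega

lemma phi_injective (s : Fin (m + 1)) : Function.Injective (phi s) := by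
  intro a b hab
  have h := congrArg Fin.val hab
  rw [phi_val, phi_val] at h
  apply Fin.ext
  split at h <;> split at h <;> omega

lemma phi_le_iff (s : Fin (m + 1)) (a b : Fin m) : phi s a ≤ phi s b ↔ a ≤ b := by
  have ha := phi_val s a
  have hb := phi_val s b
  rw [Fin.le_def, Fin.le_def, ha, hb]
  split <;> split <;> omega

def psi {k : ℕ} (s t : Fin (k + 2)) : Fin (k + 1) :=
  if h : t.val < s.val then ⟨t.val, by have := s.isLt; omega⟩
  else ⟨t.val - 1, by have := t.isLt; omega⟩

lemma occupiedAfter_succ {n : ℕ} (α : Fin n → Fin n) (j : ℕ) (h : j < n) :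
    occupiedAfter α (j + 1) =
      match nextSpot (occupiedAfter α j) (α ⟨j, h⟩) with
      | some s => insert s (occupiedAfter α j)
      | none => occupiedAfter α j := by
  conv_lhs => rw [occupiedAfter]
  rw [dif_pos h]

lemma occupiedAfter_zero {n : ℕ} (α : Fin n → Fin n) : occupiedAfter α 0 = ∅ := by
  rw [occupiedAfter]

lemma phi_psi {k : ℕ} {s t : Fin (k + 2)} (h : t ≠ s) : phi s (psi s t) = t := by
  have hne : t.val ≠ s.val := fun he => h (Fin.ext he)
  apply Fin.ext
  rw [phi_val]
  unfold psi
  split <;> simp only [] <;> split <;> omega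

lemma psi_phi {k : ℕ} (s : Fin (k + 2)) (q : Fin (k + 1)) : psi s (phi s q) = q :=
  phi_injective s (phi_psi (phi_ne s q))

lemma exists_phi {k : ℕ} {s t : Fin (k + 2)} (h : t ≠ s) : ∃ q, phi s q = t :=
  ⟨psi s t, phi_psi h⟩

lemma nextSpot_of_not_mem {n : ℕ} (occ : Finset (Fin n)) (p : Fin n) (h : p ∉ occ) :
    nextSpot occ p = some p := by
  unfold nextSpot
  have hp : p ∈ univ.filter (fun s : Fin n => p ≤ s ∧ s ∉ occ) := by simp [h]
  rw [dif_pos ⟨p, hp⟩]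
  congr 1
  refine le_antisymm (min'_le _ _ hp) (le_min' _ _ _ ?_)
  intro y hy
  exact (mem_filter.mp hy).2.1

lemma nextSpot_phi {k : ℕ} (s : Fin (k + 2)) (occ : Finset (Fin (k + 1))) (p : Fin (k + 1)) :
    nextSpot (insert s (occ.image (phi s))) (phi s p)
      = Option.map (phi s) (nextSpot occ p) := by
  have hF : univ.filter
        (fun t : Fin (k + 2) => phi s p ≤ t ∧ t ∉ insert s (occ.image (phi s)))
      = (univ.filter (fun q : Fin (k + 1) => p ≤ q ∧ q ∉ occ)).image (phi s) := by
    ext t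
    simp only [mem_filter, mem_univ, true_and, mem_insert, mem_image, not_or, not_exists,
      not_and]
    constructor
    · rintro ⟨hle, hns, hni⟩
      obtain ⟨q, rfl⟩ := exists_phi hns
      exact ⟨q, ⟨(phi_le_iff s p q).mp hle, fun hq => hni q hq rfl⟩, rfl⟩
    · rintro ⟨q, ⟨hpq, hq⟩, rfl⟩
      refine ⟨(phi_le_iff s p q).mpr hpq, phi_ne s q, ?_⟩
      intro q' hq' he
      exact hq ((phi_injective s he) ▸ hq')
  unfold nextSpot
  rw [hF]
  by_cases hne : (univ.filter (fun q : Fin (k + 1) => p ≤ q ∧ q ∉ occ)).Nonempty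
  · rw [dif_pos hne, dif_pos (hne.image _), Option.map_some]
    congr 1
    apply le_antisymm
    · exact min'_le _ _ (mem_image_of_mem _ (min'_mem _ hne))
    · obtain ⟨q, hq, he⟩ := mem_image.mp (min'_mem _ (hne.image (phi s)))
      rw [← he]
      exact (phi_le_iff s _ _).mpr (min'_le _ _ hq)
  · rw [dif_neg hne, dif_neg (by simpa [Finset.image_nonempty] using hne), Option.map_none]

def lift {k : ℕ} (s : Fin (k + 2)) (β : Fin (k + 1) → Fin (k + 1)) :
    Fin (k + 2) → Fin (k + 2) :=
  Fin.cases s (fun q => phi s (β q))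

@[simp] lemma lift_zero {k : ℕ} (s : Fin (k + 2)) (β : Fin (k + 1) → Fin (k + 1)) :
    lift s β 0 = s := rfl

@[simp] lemma lift_succ {k : ℕ} (s : Fin (k + 2)) (β : Fin (k + 1) → Fin (k + 1))
    (q : Fin (k + 1)) : lift s β q.succ = phi s (β q) := by
  simp [lift]

lemma occupiedAfter_lift {k : ℕ} (s : Fin (k + 2)) (β : Fin (k + 1) → Fin (k + 1)) :
    ∀ j, j ≤ k + 1 →
      occupiedAfter (lift s β) (j + 1) = insert s ((occupiedAfter β j).image (phi s)) := by
  intro j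
  induction j with
  | zero =>
    intro _
    have h0 : (0:ℕ) < k + 2 := by omega
    rw [occupiedAfter_succ (lift s β) 0 h0]
    have : lift s β ⟨0, h0⟩ = s := rfl
    rw [this, occupiedAfter_zero, nextSpot_of_not_mem _ _ (notMem_empty s)]
    simp [occupiedAfter_zero]
  | succ j ih =>
    intro hj
    have hj' : j ≤ k + 1 := by omega
    have hjk : j < k + 1 := by omega
    have h1 : j + 1 < k + 2 := by omega
    have hsucc : (⟨j + 1, h1⟩ : Fin (k + 2)) = (⟨j, hjk⟩ : Fin (k + 1)).succ := rfl
    rw [occupiedAfter_succ (lift s β) (j+1) h1, occupiedAfter_succ β j hjk,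
      ih hj', hsucc, lift_succ, nextSpot_phi]
    cases hns : nextSpot (occupiedAfter β j) (β ⟨j, hjk⟩) with
    | none => simp
    | some t =>
      simp only [Option.map_some]
      rw [Finset.image_insert, Finset.insert_comm]

lemma carSpot_lift_zero {k : ℕ} (s : Fin (k + 2)) (β : Fin (k + 1) → Fin (k + 1)) :
    carSpot (lift s β) 0 = some s := by
  show nextSpot (occupiedAfter (lift s β) (0 : Fin (k+2)).val) (lift s β 0) = some s
  rw [lift_zero]
  show nextSpot (occupiedAfter (lift s β) 0) s = some s
  rw [occupiedAfter_zero]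
  exact nextSpot_of_not_mem _ _ (notMem_empty s)

lemma carSpot_lift_succ {k : ℕ} (s : Fin (k + 2)) (β : Fin (k + 1) → Fin (k + 1))
    (q : Fin (k + 1)) :
    carSpot (lift s β) q.succ = Option.map (phi s) (carSpot β q) := by
  show nextSpot (occupiedAfter (lift s β) (q.succ).val) (lift s β q.succ) = _
  rw [Fin.val_succ, occupiedAfter_lift s β q.val (by omega), lift_succ, nextSpot_phi]
  rfl

lemma luckyCount_lift {k : ℕ} (s : Fin (k + 2)) (β : Fin (k + 1) → Fin (k + 1)) :
    luckyCount (lift s β) = luckyCount β + 1 := by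
  unfold luckyCount
  rw [card_filter, card_filter, Fin.sum_univ_succ]
  have h0 : carSpot (lift s β) 0 = some (lift s β 0) := by
    rw [carSpot_lift_zero, lift_zero]
  rw [if_pos h0]
  have hterm : ∀ q : Fin (k + 1),
      (if carSpot (lift s β) q.succ = some (lift s β q.succ) then 1 else 0)
        = (if carSpot β q = some (β q) then (1:ℕ) else 0) := by
    intro q
    congr 1
    rw [carSpot_lift_succ, lift_succ]
    rw [show (some (phi s (β q)) : Option (Fin (k+2))) = Option.map (phi s) (some (β q)) from rfl]
    simp only [eq_iff_iff]
    exact (Option.map_injective (phi_injective s)).eq_iff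
  rw [Finset.sum_congr rfl (fun q _ => hterm q)]
  omega

lemma lift_eq {k : ℕ} (α : Fin (k + 2) → Fin (k + 2))
    (h : ∀ j, j ≠ 0 → α j ≠ α 0) :
    lift (α 0) (fun q => psi (α 0) (α q.succ)) = α := by
  funext i
  induction i using Fin.cases with
  | zero => exact lift_zero _ _
  | succ q =>
    rw [lift_succ]
    exact phi_psi (h q.succ (Fin.succ_ne_zero q))

end ParkAux

open ParkAux in
/-- For `n ≥ 2`, the number of preference lists in `[n]^n` with exactly `n-1` lucky
cars in which car 1 is not a competing car (its preference differs from that of every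
other car) equals `n * L_{n-1}`. -/
theorem card_not_competing_eq (n : ℕ) (hn : 2 ≤ n) :
    (Finset.univ.filter (fun α : Fin n → Fin n =>
        (luckyCount α : ℤ) = (n : ℤ) - 1 ∧
        ∀ j : Fin n, j ≠ ⟨0, by omega⟩ → α j ≠ α ⟨0, by omega⟩)).card
      = n * luckyL (n - 1) := by
  obtain ⟨m, rfl⟩ : ∃ m, n = m + 2 := ⟨n - 2, by omega⟩
  have hcard : ((Finset.univ : Finset (Fin (m + 2))) ×ˢ Finset.univ.filter
      (fun β : Fin (m + 1) → Fin (m + 1) =>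
        (luckyCount β : ℤ) = ((m + 1 : ℕ) : ℤ) - 1)).card
      = (m + 2) * luckyL (m + 2 - 1) := by
    rw [Finset.card_product, Finset.card_univ, Fintype.card_fin]
    rfl
  rw [← hcard]
  apply Finset.card_nbij'
    (i := fun α => (α 0, fun q : Fin (m + 1) => psi (α 0) (α q.succ)))
    (j := fun p => lift p.1 p.2)
  · -- hi
    intro α hα
    rw [Finset.mem_coe, Finset.mem_filter] at hα
    obtain ⟨-, hl, hc⟩ := hα
    have hc' : ∀ j : Fin (m + 2), j ≠ 0 → α j ≠ α 0 := hc
    have hle : lift (α 0) (fun q : Fin (m + 1) => psi (α 0) (α q.succ)) = α :=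
      lift_eq α hc'
    have hlc : luckyCount α = luckyCount (fun q : Fin (m + 1) => psi (α 0) (α q.succ)) + 1 := by
      rw [← hle, luckyCount_lift, hle]
    rw [Finset.mem_coe, Finset.mem_product, Finset.mem_filter]
    refine ⟨Finset.mem_univ _, Finset.mem_univ _, ?_⟩
    rw [hlc] at hl
    push_cast at hl ⊢
    omega
  · -- hj
    rintro ⟨s, β⟩ hp
    rw [Finset.mem_coe, Finset.mem_product, Finset.mem_filter] at hp
    obtain ⟨-, -, hl⟩ := hp
    rw [Finset.mem_coe, Finset.mem_filter]
    refine ⟨Finset.mem_univ _, ?_, ?_⟩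
    · rw [luckyCount_lift]
      push_cast at hl ⊢
      omega
    · intro j hj
      have hj0 : j ≠ 0 := hj
      induction j using Fin.cases with
      | zero => exact absurd rfl hj0
      | succ q =>
        show lift s β q.succ ≠ lift s β 0
        rw [lift_succ, lift_zero]
        exact phi_ne s (β q)
  · -- left inverse
    intro α hα
    rw [Finset.mem_coe, Finset.mem_filter] at hα
    exact lift_eq α hα.2.2
  · -- right inverse
    rintro ⟨s, β⟩ -
    have h1 : lift s β 0 = s := lift_zero s β
    refine Prod.ext h1 ?_
    funext q
    show psi (lift s β 0) (lift s β q.succ) = β q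
    rw [h1, lift_succ]
    exact psi_phi s (β q)
end
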